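/- arXiv:2311.06597 — 5 statements merged into one kernel-verified Lean document; each statement's English description precedes it below -/
import Mathlib

section
/- Let f : ℝ^d → ℝ^k be differentiable with L-Lipschitz total derivative (L ≥ 0), let (x_1,y_1),…,(x_n,y_n) with n ≥ 1 be training samples with x_i ∈ ℝ^d and labels y_i ∈ {1,…,k} such that f interpolates the one-hot labels, i.e. f(x_i) = e_{y_i} for every i, and suppose B ≥ 0 satisfies (1/n)·∑_{i=1}^n ‖Df(x_i)‖_op² ≤ B. Set ε = min{1, 1/(2(√(nB) + L))}. Let T be a finite set of test pairs (x′, y′) ∈ ℝ^d × {1,…,k} and let 0 ≤ δ ≤ 1. If at least δ·|T| of the pairs (x′,y′) ∈ T admit an index i with y_i = y′ and ‖x′ − x_i‖₂ ≤ ε, then at least δ·|T| of the pairs (x′,y′) ∈ T are correctly classified by f, i.e. satisfy f(x′)_j ≤ f(x′)_{y′} for every coordinate j. -/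
/-!
Near a training point `xᵢ` the derivative of `f` has norm at most `‖Df(xᵢ)‖ + L ≤ √(nB) + L`
(a single term of the average is at most `n` times the average), so by the mean value theorem
`f` moves by at most `(√(nB) + L) ε ≤ 1/2` on the `ε`-ball around `xᵢ`. Every coordinate of
`f x'` is then within `1/2` of the one-hot vector `e_{yᵢ}`, so coordinate `yᵢ` is the largest.
Hence every test pair with a same-label training neighbour is correctly classified.
-/

lemma norm_le_sqrt_of_mean_sq_le {E : Type*} [SeminormedAddGroup E] {n : ℕ} (a : Fin n → E)
    {B : ℝ} (hB : (1 / (n : ℝ)) * ∑ i, ‖a i‖ ^ 2 ≤ B) (i : Fin n) :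
    ‖a i‖ ≤ Real.sqrt (n * B) := by
  have hn : (0 : ℝ) < n := by exact_mod_cast i.pos
  have hsum : ∑ j, ‖a j‖ ^ 2 ≤ n * B := by
    rwa [one_div, inv_mul_le_iff₀ hn] at hB
  refine Real.le_sqrt_of_sq_le (le_trans ?_ hsum)
  exact Finset.single_le_sum (f := fun j => ‖a j‖ ^ 2) (fun j _ => sq_nonneg _)
    (Finset.mem_univ i)

section MeanValue

variable {E F : Type*} [NormedAddCommGroup E] [NormedSpace ℝ E]
  [NormedAddCommGroup F] [NormedSpace ℝ F]

lemma norm_fderiv_le_of_lipschitz_fderiv {f : E → F} {L : ℝ}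
    (hlip : ∀ u v, ‖fderiv ℝ f u - fderiv ℝ f v‖ ≤ L * ‖u - v‖) (a z : E) :
    ‖fderiv ℝ f z‖ ≤ ‖fderiv ℝ f a‖ + L * ‖z - a‖ :=
  calc ‖fderiv ℝ f z‖ ≤ ‖fderiv ℝ f a‖ + ‖fderiv ℝ f z - fderiv ℝ f a‖ :=
        norm_le_norm_add_norm_sub' _ _
    _ ≤ ‖fderiv ℝ f a‖ + L * ‖z - a‖ := by gcongr; exact hlip z a

lemma norm_sub_le_of_lipschitz_fderiv {f : E → F} (hf : Differentiable ℝ f) {L M r : ℝ}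
    (hL : 0 ≤ L) (hlip : ∀ u v, ‖fderiv ℝ f u - fderiv ℝ f v‖ ≤ L * ‖u - v‖)
    {a b : E} (hM : ‖fderiv ℝ f a‖ ≤ M) (hb : ‖b - a‖ ≤ r) :
    ‖f b - f a‖ ≤ (M + L * r) * ‖b - a‖ := by
  have hbound : ∀ z ∈ Metric.closedBall a r, ‖fderiv ℝ f z‖ ≤ M + L * r := by
    intro z hz
    rw [Metric.mem_closedBall, dist_eq_norm] at hz
    calc ‖fderiv ℝ f z‖ ≤ ‖fderiv ℝ f a‖ + L * ‖z - a‖ :=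
          norm_fderiv_le_of_lipschitz_fderiv hlip a z
      _ ≤ M + L * r := by gcongr
  have hr : 0 ≤ r := (norm_nonneg _).trans hb
  exact (convex_closedBall a r).norm_image_sub_le_of_norm_fderiv_le (fun z _ => hf z) hbound
    (Metric.mem_closedBall_self hr) (by rwa [Metric.mem_closedBall, dist_eq_norm])

end MeanValue

lemma apply_le_apply_of_norm_sub_single_le_half {ι : Type*} [Fintype ι] [DecidableEq ι]
    {v : EuclideanSpace ℝ ι} {c : ι} (hv : ‖v - EuclideanSpace.single c 1‖ ≤ 1 / 2) (j : ι) :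
    v j ≤ v c := by
  have hcoord : ∀ i, |v i - EuclideanSpace.single c (1 : ℝ) i| ≤ 1 / 2 := fun i =>
    (PiLp.norm_apply_le (v - EuclideanSpace.single c 1) i).trans hv
  rcases eq_or_ne j c with rfl | hjc
  · exact le_rfl
  · have hj := hcoord j
    have hc := hcoord c
    rw [PiLp.single_apply, if_neg hjc] at hj
    rw [PiLp.single_apply, if_pos rfl] at hc
    linarith [(abs_le.mp hj).2, (abs_le.mp hc).1]

lemma min_one_one_div_two_mul_mul_le_half {C : ℝ} (hC : 0 ≤ C) :
    min 1 (1 / (2 * C)) * C ≤ 1 / 2 := by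
  rcases hC.eq_or_lt with rfl | hCpos
  · norm_num
  · calc min 1 (1 / (2 * C)) * C ≤ 1 / (2 * C) * C := by gcongr; exact min_le_right _ _
      _ = 1 / 2 := by field_simp

theorem statement0_general {d k n : ℕ}
    (f : EuclideanSpace ℝ (Fin d) → EuclideanSpace ℝ (Fin k))
    (L : ℝ) (hL : 0 ≤ L)
    (hf : Differentiable ℝ f)
    (hlip : ∀ u v, ‖fderiv ℝ f u - fderiv ℝ f v‖ ≤ L * ‖u - v‖)
    (x : Fin n → EuclideanSpace ℝ (Fin d)) (y : Fin n → Fin k)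
    (hinterp : ∀ i, f (x i) = EuclideanSpace.single (y i) 1)
    (B : ℝ)
    (hB : (1 / (n : ℝ)) * ∑ i, ‖fderiv ℝ f (x i)‖ ^ 2 ≤ B)
    (ε : ℝ) (hε : ε = min 1 (1 / (2 * (Real.sqrt ((n : ℝ) * B) + L))))
    (T : Finset (EuclideanSpace ℝ (Fin d) × Fin k))
    (δ : ℝ)
    (hcover : δ * T.card ≤
      (T.filter (fun p => ∃ i, y i = p.2 ∧ ‖p.1 - x i‖ ≤ ε)).card) :
    δ * T.card ≤
      (T.filter (fun p => ∀ j, f p.1 j ≤ f p.1 p.2)).card := by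
  set M := Real.sqrt ((n : ℝ) * B)
  have hε1 : ε ≤ 1 := hε ▸ min_le_left _ _
  have hεC : ε * (M + L) ≤ 1 / 2 :=
    hε ▸ min_one_one_div_two_mul_mul_le_half (add_nonneg (Real.sqrt_nonneg _) hL)
  have hclassified : ∀ p ∈ T, (∃ i, y i = p.2 ∧ ‖p.1 - x i‖ ≤ ε) →
      ∀ j, f p.1 j ≤ f p.1 p.2 := by
    rintro ⟨x', y'⟩ _ ⟨i, rfl, hdist⟩
    have hmove : ‖f x' - f (x i)‖ ≤ 1 / 2 :=
      calc ‖f x' - f (x i)‖ ≤ (M + L * ε) * ‖x' - x i‖ :=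
            norm_sub_le_of_lipschitz_fderiv hf hL hlip
              (norm_le_sqrt_of_mean_sq_le (fun i => fderiv ℝ f (x i)) hB i) hdist
        _ ≤ (M + L) * ε := by
            gcongr
            exact mul_le_of_le_one_right hL hε1
        _ ≤ 1 / 2 := by linarith
    exact apply_le_apply_of_norm_sub_single_le_half (hinterp i ▸ hmove)
  exact hcover.trans <| by
    exact_mod_cast Finset.card_le_card (Finset.monotone_filter_right T hclassified)

/-- If `f` interpolates the one-hot training labels, has `L`-Lipschitz
total derivative, and the average squared operator norm of its derivative at the
training points is at most `B`, then any fraction `δ` of test pairs admitting a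
training neighbour of the same label within distance `ε = min 1 (1/(2(√(nB)+L)))`
is correctly classified. -/
theorem statement0 {d k n : ℕ} (hn : 1 ≤ n)
    (f : EuclideanSpace ℝ (Fin d) → EuclideanSpace ℝ (Fin k))
    (L : ℝ) (hL : 0 ≤ L)
    (hf : Differentiable ℝ f)
    (hlip : ∀ u v, ‖fderiv ℝ f u - fderiv ℝ f v‖ ≤ L * ‖u - v‖)
    (x : Fin n → EuclideanSpace ℝ (Fin d)) (y : Fin n → Fin k)
    (hinterp : ∀ i, f (x i) = EuclideanSpace.single (y i) 1)
    (B : ℝ) (hB0 : 0 ≤ B)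
    (hB : (1 / (n : ℝ)) * ∑ i, ‖fderiv ℝ f (x i)‖ ^ 2 ≤ B)
    (ε : ℝ) (hε : ε = min 1 (1 / (2 * (Real.sqrt ((n : ℝ) * B) + L))))
    (T : Finset (EuclideanSpace ℝ (Fin d) × Fin k))
    (δ : ℝ) (hδ0 : 0 ≤ δ) (hδ1 : δ ≤ 1)
    (hcover : δ * T.card ≤
      (T.filter (fun p => ∃ i, y i = p.2 ∧ ‖p.1 - x i‖ ≤ ε)).card) :
    δ * T.card ≤
      (T.filter (fun p => ∀ j, f p.1 j ≤ f p.1 p.2)).card :=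
  statement0_general f L hL hf hlip x y hinterp B hB ε hε T δ hcover
end

section
/- Let f : ℝ^d → ℝ^k be differentiable with L-Lipschitz total derivative where L ≥ 1/2, let (x_1,y_1),…,(x_n,y_n) with n ≥ 1 be training samples such that f(x_i) = e_{y_i} for every i, let a, b ∈ ℝ and t ≥ 1 (the number of training steps), and suppose (1/n)·∑_{i=1}^n ‖Df(x_i)‖_op² ≤ (max{a − b·log₁₀ t, 0})²/(4n). Let T be a finite set of test pairs and 0 ≤ δ ≤ 1. If at least δ·|T| of the pairs (x′,y′) ∈ T admit an index i with y_i = y′ and ‖x′ − x_i‖₂ ≤ 1/(2L + max{a − b·log₁₀ t, 0}), then at least δ·|T| of the pairs (x′,y′) ∈ T satisfy f(x′)_j ≤ f(x′)_{y′} for every coordinate j. -/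
/-!
Write `M = max (a - b·log₁₀ t) 0`. The averaged sharpness bound forces `‖Df(xᵢ)‖ ≤ M / 2` at every
training point, and the Lipschitz derivative then gives `‖Df‖ ≤ M / 2 + L r` on the ball of radius
`r = 1 / (2L + M)` around `xᵢ`. By the mean value inequality `f` stays within `(M / 2 + L r) r ≤ 1 / 2`
of `f(xᵢ) = e_{yᵢ}` on that ball, and any vector that close to `e_y` has its largest coordinate at `y`.
So every covered test pair is correctly classified.
-/

open scoped Classical

lemma le_half_of_mean_sq_le {n : ℕ} {g : Fin n → ℝ} (hg : ∀ i, 0 ≤ g i) {M : ℝ} (hM : 0 ≤ M)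
    (h : 1 / (n : ℝ) * ∑ i, g i ^ 2 ≤ M ^ 2 / (4 * n)) (i : Fin n) : g i ≤ M / 2 := by
  have hn : (0 : ℝ) < n := by exact_mod_cast i.pos
  have hsum : ∑ i, g i ^ 2 ≤ (M / 2) ^ 2 := by
    rw [one_div, inv_mul_le_iff₀ hn] at h
    calc ∑ i, g i ^ 2 ≤ n * (M ^ 2 / (4 * n)) := h
      _ = (M / 2) ^ 2 := by field_simp; ring
  have hi : g i ^ 2 ≤ (M / 2) ^ 2 :=
    (Finset.single_le_sum (fun j _ => sq_nonneg (g j)) (Finset.mem_univ i)).trans hsum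
  exact (pow_le_pow_iff_left₀ (hg i) (by positivity) two_ne_zero).mp hi

lemma norm_sub_le_of_norm_fderiv_le_of_lipschitz {E F : Type*}
    [NormedAddCommGroup E] [NormedSpace ℝ E] [NormedAddCommGroup F] [NormedSpace ℝ F]
    {f : E → F} (hf : Differentiable ℝ f) {L : ℝ} (hL : 0 ≤ L) {x₀ x : E}
    (hlip : ∀ u, ‖fderiv ℝ f u - fderiv ℝ f x₀‖ ≤ L * ‖u - x₀‖)
    {C r : ℝ} (hC : ‖fderiv ℝ f x₀‖ ≤ C) (hx : ‖x - x₀‖ ≤ r) :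
    ‖f x - f x₀‖ ≤ (C + L * r) * r := by
  have hball : ∀ w ∈ Metric.closedBall x₀ r, ‖fderiv ℝ f w‖ ≤ C + L * r := by
    intro w hw
    rw [Metric.mem_closedBall, dist_eq_norm] at hw
    calc ‖fderiv ℝ f w‖ ≤ ‖fderiv ℝ f x₀‖ + ‖fderiv ℝ f w - fderiv ℝ f x₀‖ :=
          norm_le_insert' _ _
      _ ≤ C + L * r := add_le_add hC ((hlip w).trans (mul_le_mul_of_nonneg_left hw hL))
  have hr : 0 ≤ r := (norm_nonneg _).trans hx
  have hbound := (convex_closedBall x₀ r).norm_image_sub_le_of_norm_fderiv_le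
    (fun w _ => hf w) hball (Metric.mem_closedBall_self hr)
    (by rwa [Metric.mem_closedBall, dist_eq_norm])
  exact hbound.trans (mul_le_mul_of_nonneg_left hx ((norm_nonneg _).trans (hball x₀
    (Metric.mem_closedBall_self hr))))

lemma half_add_mul_one_div_mul_one_div_le_half {L M : ℝ} (hL : 0 ≤ L) (hs : 1 ≤ 2 * L + M) :
    (M / 2 + L * (1 / (2 * L + M))) * (1 / (2 * L + M)) ≤ 1 / 2 := by
  have hs0 : 0 < 2 * L + M := by linarith
  have hgap : 1 / 2 - (M / 2 + L * (1 / (2 * L + M))) * (1 / (2 * L + M)) =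
      L * (2 * L + M - 1) / (2 * L + M) ^ 2 := by
    field_simp; ring
  have : 0 ≤ L * (2 * L + M - 1) / (2 * L + M) ^ 2 :=
    div_nonneg (mul_nonneg hL (by linarith)) (sq_nonneg _)
  linarith

lemma EuclideanSpace.le_apply_of_norm_sub_single_le_half {ι : Type*} [Fintype ι] [DecidableEq ι]
    {v : EuclideanSpace ℝ ι} {y : ι} (hv : ‖v - EuclideanSpace.single y 1‖ ≤ 1 / 2) (j : ι) :
    v j ≤ v y := by
  have hcoord : ∀ i, |v i - EuclideanSpace.single y (1 : ℝ) i| ≤ 1 / 2 := fun i =>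
    (PiLp.norm_apply_le (v - EuclideanSpace.single y 1) i).trans hv
  have hy := abs_le.mp (hcoord y)
  have hj := abs_le.mp (hcoord j)
  by_cases hjy : j = y
  · rw [hjy]
  · simp only [PiLp.single_apply, hjy, if_true, if_false] at hy hj
    linarith [hy.1, hj.2]

theorem statement1_general {d k n : ℕ}
    (f : EuclideanSpace ℝ (Fin d) → EuclideanSpace ℝ (Fin k))
    (L : ℝ) (hL : (1 : ℝ) / 2 ≤ L)
    (hf : Differentiable ℝ f)
    (hlip : ∀ u v, ‖fderiv ℝ f u - fderiv ℝ f v‖ ≤ L * ‖u - v‖)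
    (x : Fin n → EuclideanSpace ℝ (Fin d)) (y : Fin n → Fin k)
    (hinterp : ∀ i, f (x i) = EuclideanSpace.single (y i) 1)
    (a b t : ℝ)
    (hB : (1 / (n : ℝ)) * ∑ i, ‖fderiv ℝ f (x i)‖ ^ 2 ≤
      (max (a - b * Real.logb 10 t) 0) ^ 2 / (4 * (n : ℝ)))
    (T : Finset (EuclideanSpace ℝ (Fin d) × Fin k))
    (δ : ℝ)
    (hcover : δ * T.card ≤
      (T.filter (fun p => ∃ i, y i = p.2 ∧
        ‖p.1 - x i‖ ≤ 1 / (2 * L + max (a - b * Real.logb 10 t) 0))).card) :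
    δ * T.card ≤
      (T.filter (fun p => ∀ j, f p.1 j ≤ f p.1 p.2)).card := by
  set M := max (a - b * Real.logb 10 t) 0
  have hM : 0 ≤ M := le_max_right _ _
  have hL0 : 0 ≤ L := by linarith
  have hsharp : ∀ i, ‖fderiv ℝ f (x i)‖ ≤ M / 2 :=
    le_half_of_mean_sq_le (fun _ => norm_nonneg _) hM hB
  refine hcover.trans (Nat.cast_le.mpr (Finset.card_le_card (Finset.monotone_filter_right _ ?_)))
  rintro ⟨x', _⟩ - ⟨i, rfl, hdist⟩
  refine EuclideanSpace.le_apply_of_norm_sub_single_le_half ?_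
  rw [← hinterp i]
  exact (norm_sub_le_of_norm_fderiv_le_of_lipschitz hf hL0 (fun u => hlip u (x i)) (hsharp i)
    hdist).trans (half_add_mul_one_div_mul_one_div_le_half hL0 (by linarith))

/-- phase-transition corollary with the weight-norm/sharpness bound
`max(a - b·log₁₀ t, 0)² / (4n)` and neighbourhood radius
`1/(2L + max(a - b·log₁₀ t, 0))`. -/
theorem statement1 {d k n : ℕ} (hn : 1 ≤ n)
    (f : EuclideanSpace ℝ (Fin d) → EuclideanSpace ℝ (Fin k))
    (L : ℝ) (hL : (1 : ℝ) / 2 ≤ L)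
    (hf : Differentiable ℝ f)
    (hlip : ∀ u v, ‖fderiv ℝ f u - fderiv ℝ f v‖ ≤ L * ‖u - v‖)
    (x : Fin n → EuclideanSpace ℝ (Fin d)) (y : Fin n → Fin k)
    (hinterp : ∀ i, f (x i) = EuclideanSpace.single (y i) 1)
    (a b t : ℝ) (ht : 1 ≤ t)
    (hB : (1 / (n : ℝ)) * ∑ i, ‖fderiv ℝ f (x i)‖ ^ 2 ≤
      (max (a - b * Real.logb 10 t) 0) ^ 2 / (4 * (n : ℝ)))
    (T : Finset (EuclideanSpace ℝ (Fin d) × Fin k))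
    (δ : ℝ) (hδ0 : 0 ≤ δ) (hδ1 : δ ≤ 1)
    (hcover : δ * T.card ≤
      (T.filter (fun p => ∃ i, y i = p.2 ∧
        ‖p.1 - x i‖ ≤ 1 / (2 * L + max (a - b * Real.logb 10 t) 0))).card) :
    δ * T.card ≤
      (T.filter (fun p => ∀ j, f p.1 j ≤ f p.1 p.2)).card :=
  statement1_general f L hL hf hlip x y hinterp a b t hB T δ hcover
end

section
/- Let n ≥ 1 and let z_1,…,z_n and z′_1,…,z′_n be vectors in ℝ^d, each of Euclidean norm 1. Then |log(∑_{i,j} ⟨z_i, z_j⟩²) − log(∑_{i,j} ⟨z′_i, z′_j⟩²)| ≤ 8·∑_{i=1}^n ‖z_i − z′_i‖₂. Equivalently, with G and G′ the Gram matrices G_{ij} = ⟨z_i,z_j⟩ and G′_{ij} = ⟨z′_i,z′_j⟩, one has |H₂(G) − H₂(G′)| ≤ 8·∑_{i=1}^n ‖z_i − z′_i‖₂. -/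
open scoped RealInnerProductSpace

/-!
Both double sums are at least `n`, coming from their diagonal terms `⟪zᵢ, zᵢ⟫² = 1`, and `log` is
`1/n`-Lipschitz on `[n, ∞)`. Moving from `z` to `z'` changes the entry `⟪zᵢ, zⱼ⟫²` by at most
`2 (‖zᵢ - z'ᵢ‖ + ‖zⱼ - z'ⱼ‖)`, so the double sums differ by at most `4 n ∑ᵢ ‖zᵢ - z'ᵢ‖`; dividing
by `n` even gives the constant `4`.
-/

namespace Real

lemma log_sub_log_le_sub_div {c a b : ℝ} (hc : 0 < c) (ha : c ≤ a) (hab : a ≤ b) :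
    log b - log a ≤ (b - a) / c := by
  have ha₀ : 0 < a := hc.trans_le ha
  calc log b - log a = log (b / a) := (log_div (ha₀.trans_le hab).ne' ha₀.ne').symm
    _ ≤ b / a - 1 := log_le_sub_one_of_pos (div_pos (ha₀.trans_le hab) ha₀)
    _ = (b - a) / a := by field_simp
    _ ≤ (b - a) / c := by gcongr

lemma abs_log_sub_log_le_abs_sub_div {c a b : ℝ} (hc : 0 < c) (ha : c ≤ a) (hb : c ≤ b) :
    |log a - log b| ≤ |a - b| / c := by
  wlog hab : a ≤ b generalizing a b
  · rw [abs_sub_comm, abs_sub_comm a]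
    exact this hb ha (le_of_not_ge hab)
  rw [abs_sub_comm, abs_sub_comm a, abs_of_nonneg (sub_nonneg.2 hab),
    abs_of_nonneg (sub_nonneg.2 (log_le_log (hc.trans_le ha) hab))]
  exact log_sub_log_le_sub_div hc ha hab

end Real

lemma abs_sq_sub_sq_le_two_mul_abs_sub {a b : ℝ} (ha : |a| ≤ 1) (hb : |b| ≤ 1) :
    |a ^ 2 - b ^ 2| ≤ 2 * |a - b| := by
  rw [sq_sub_sq, abs_mul]
  gcongr
  linarith [abs_add_le a b]

lemma sum_sum_add_eq_two_card_mul_sum {ι : Type*} [Fintype ι] (f : ι → ℝ) :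
    ∑ i, ∑ j, (f i + f j) = 2 * Fintype.card ι * ∑ i, f i := by
  simp only [Finset.sum_add_distrib, Finset.sum_const, Finset.card_univ, nsmul_eq_mul,
    ← Finset.mul_sum]
  ring

section InnerProductSpace

variable {E : Type*} [NormedAddCommGroup E] [InnerProductSpace ℝ E]

lemma abs_real_inner_sub_real_inner_le {x y x' y' : E} (hy : ‖y‖ ≤ 1) (hx' : ‖x'‖ ≤ 1) :
    |⟪x, y⟫ - ⟪x', y'⟫| ≤ ‖x - x'‖ + ‖y - y'‖ := by
  have hsplit : ⟪x, y⟫ - ⟪x', y'⟫ = ⟪x - x', y⟫ + ⟪x', y - y'⟫ := by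
    simp only [inner_sub_left, inner_sub_right]; ring
  calc |⟪x, y⟫ - ⟪x', y'⟫| ≤ |⟪x - x', y⟫| + |⟪x', y - y'⟫| := hsplit ▸ abs_add_le _ _
    _ ≤ ‖x - x'‖ * ‖y‖ + ‖x'‖ * ‖y - y'‖ :=
      add_le_add (abs_real_inner_le_norm _ _) (abs_real_inner_le_norm _ _)
    _ ≤ ‖x - x'‖ + ‖y - y'‖ :=
      add_le_add (mul_le_of_le_one_right (norm_nonneg _) hy)
        (mul_le_of_le_one_left (norm_nonneg _) hx')

lemma abs_real_inner_le_one {x y : E} (hx : ‖x‖ ≤ 1) (hy : ‖y‖ ≤ 1) : |⟪x, y⟫| ≤ 1 :=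
  (abs_real_inner_le_norm x y).trans (mul_le_one₀ hx (norm_nonneg y) hy)

lemma abs_real_inner_sq_sub_real_inner_sq_le {x y x' y' : E} (hx : ‖x‖ ≤ 1) (hy : ‖y‖ ≤ 1)
    (hx' : ‖x'‖ ≤ 1) (hy' : ‖y'‖ ≤ 1) :
    |⟪x, y⟫ ^ 2 - ⟪x', y'⟫ ^ 2| ≤ 2 * (‖x - x'‖ + ‖y - y'‖) :=
  (abs_sq_sub_sq_le_two_mul_abs_sub (abs_real_inner_le_one hx hy)
    (abs_real_inner_le_one hx' hy')).trans
    (by gcongr; exact abs_real_inner_sub_real_inner_le hy hx')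

variable {ι : Type*} [Fintype ι]

lemma card_le_sum_sum_real_inner_sq {w : ι → E} (hw : ∀ i, ‖w i‖ = 1) :
    (Fintype.card ι : ℝ) ≤ ∑ i, ∑ j, ⟪w i, w j⟫ ^ 2 := by
  calc (Fintype.card ι : ℝ) = ∑ i, ⟪w i, w i⟫ ^ 2 := by simp [hw]
    _ ≤ ∑ i, ∑ j, ⟪w i, w j⟫ ^ 2 := Finset.sum_le_sum fun i _ =>
      Finset.single_le_sum (f := fun j => ⟪w i, w j⟫ ^ 2) (fun _ _ => sq_nonneg _)
        (Finset.mem_univ i)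

lemma abs_sum_sum_real_inner_sq_sub_le {w w' : ι → E} (hw : ∀ i, ‖w i‖ ≤ 1)
    (hw' : ∀ i, ‖w' i‖ ≤ 1) :
    |∑ i, ∑ j, ⟪w i, w j⟫ ^ 2 - ∑ i, ∑ j, ⟪w' i, w' j⟫ ^ 2| ≤
      4 * Fintype.card ι * ∑ i, ‖w i - w' i‖ := by
  calc |∑ i, ∑ j, ⟪w i, w j⟫ ^ 2 - ∑ i, ∑ j, ⟪w' i, w' j⟫ ^ 2|
      = |∑ i, ∑ j, (⟪w i, w j⟫ ^ 2 - ⟪w' i, w' j⟫ ^ 2)| := by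
        simp only [Finset.sum_sub_distrib]
    _ ≤ ∑ i, ∑ j, |⟪w i, w j⟫ ^ 2 - ⟪w' i, w' j⟫ ^ 2| :=
      (Finset.abs_sum_le_sum_abs _ _).trans
        (Finset.sum_le_sum fun i _ => Finset.abs_sum_le_sum_abs _ _)
    _ ≤ ∑ i, ∑ j, 2 * (‖w i - w' i‖ + ‖w j - w' j‖) :=
      Finset.sum_le_sum fun i _ => Finset.sum_le_sum fun j _ =>
        abs_real_inner_sq_sub_real_inner_sq_le (hw i) (hw j) (hw' i) (hw' j)
    _ = 4 * Fintype.card ι * ∑ i, ‖w i - w' i‖ := by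
      simp only [← Finset.mul_sum]
      rw [sum_sum_add_eq_two_card_mul_sum (fun i => ‖w i - w' i‖)]
      ring

end InnerProductSpace

/-- entropy-difference lemma. For two families of unit vectors,
`|log ∑ᵢⱼ⟨zᵢ,zⱼ⟩² - log ∑ᵢⱼ⟨z'ᵢ,z'ⱼ⟩²| ≤ 8 ∑ᵢ ‖zᵢ - z'ᵢ‖`
(equivalently `|H₂(G) - H₂(G')| ≤ 8 ∑ᵢ ‖zᵢ - z'ᵢ‖`). -/
theorem statement9 {n d : ℕ} (hn : 1 ≤ n)
    (z z' : Fin n → EuclideanSpace ℝ (Fin d))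
    (hz : ∀ i, ‖z i‖ = 1) (hz' : ∀ i, ‖z' i‖ = 1) :
    |Real.log (∑ i, ∑ j, ⟪z i, z j⟫ ^ 2) -
        Real.log (∑ i, ∑ j, ⟪z' i, z' j⟫ ^ 2)| ≤
      8 * ∑ i, ‖z i - z' i‖ := by
  have hn₀ : (0 : ℝ) < n := by exact_mod_cast hn
  have hS := card_le_sum_sum_real_inner_sq hz
  have hS' := card_le_sum_sum_real_inner_sq hz'
  have hdiff := abs_sum_sum_real_inner_sq_sub_le (fun i => (hz i).le) (fun i => (hz' i).le)
  rw [Fintype.card_fin] at hS hS' hdiff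
  have hD : 0 ≤ ∑ i, ‖z i - z' i‖ := Finset.sum_nonneg fun i _ => norm_nonneg _
  calc |Real.log (∑ i, ∑ j, ⟪z i, z j⟫ ^ 2) - Real.log (∑ i, ∑ j, ⟪z' i, z' j⟫ ^ 2)|
      ≤ |∑ i, ∑ j, ⟪z i, z j⟫ ^ 2 - ∑ i, ∑ j, ⟪z' i, z' j⟫ ^ 2| / n :=
        Real.abs_log_sub_log_le_abs_sub_div hn₀ hS hS'
    _ ≤ (4 * n * ∑ i, ‖z i - z' i‖) / n := by gcongr
    _ = 4 * ∑ i, ‖z i - z' i‖ := by field_simp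
    _ ≤ 8 * ∑ i, ‖z i - z' i‖ := by linarith
end

section
/- Let n ≥ 1 and let z⁽¹⁾_1,…,z⁽¹⁾_n, z⁽²⁾_1,…,z⁽²⁾_n and (z′)⁽¹⁾_1,…,(z′)⁽¹⁾_n, (z′)⁽²⁾_1,…,(z′)⁽²⁾_n be vectors in ℝ^d, each of Euclidean norm 1. Then |log(∑_{i,j} (⟨z⁽¹⁾_i, z⁽¹⁾_j⟩·⟨z⁽²⁾_i, z⁽²⁾_j⟩)²) − log(∑_{i,j} (⟨(z′)⁽¹⁾_i, (z′)⁽¹⁾_j⟩·⟨(z′)⁽²⁾_i, (z′)⁽²⁾_j⟩)²)| ≤ 8·∑_{k=1}^{2} ∑_{i=1}^{n} ‖z⁽ᵏ⁾_i − (z′)⁽ᵏ⁾_i‖₂. Equivalently, |H₂(G₁⊙G₂) − H₂(G′₁⊙G′₂)| ≤ 8·∑_{k=1}^{2} ∑_{i=1}^{n} ‖z⁽ᵏ⁾_i − (z′)⁽ᵏ⁾_i‖₂, where G_k and G′_k are the Gram matrices of the respective families and ⊙ is the Hadamard product. -/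
/-!
The sum `S = ∑ᵢⱼ (⟨z⁽¹⁾ᵢ,z⁽¹⁾ⱼ⟩⟨z⁽²⁾ᵢ,z⁽²⁾ⱼ⟩)²` is at least `n`, since its `n` diagonal terms equal `1`,
and `log` is `1/n`-Lipschitz on `[n, ∞)`. Each of the `n²` terms is a square of a product of
inner products of unit vectors, hence moves by at most `2 (δᵢ + δⱼ)` when the vectors move, where
`δᵢ = ‖z⁽¹⁾ᵢ - z′⁽¹⁾ᵢ‖ + ‖z⁽²⁾ᵢ - z′⁽²⁾ᵢ‖`. So `S` moves by at most `4 n ∑ᵢ δᵢ`, and `log S` by at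
most `4 ∑ᵢ δᵢ`.
-/

open scoped RealInnerProductSpace
open Finset

lemma abs_log_sub_log_le_abs_sub_div {c x y : ℝ} (hc : 0 < c) (hx : c ≤ x) (hy : c ≤ y) :
    |Real.log x - Real.log y| ≤ |x - y| / c := by
  wlog hyx : y ≤ x generalizing x y
  · rw [abs_sub_comm, abs_sub_comm x y]
    exact this hy hx (le_of_not_ge hyx)
  have hx0 : 0 < x := hc.trans_le hx
  have hy0 : 0 < y := hc.trans_le hy
  rw [abs_of_nonneg (sub_nonneg.2 (Real.log_le_log hy0 hyx)), abs_of_nonneg (sub_nonneg.2 hyx),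
    ← Real.log_div hx0.ne' hy0.ne']
  calc Real.log (x / y) ≤ x / y - 1 := Real.log_le_sub_one_of_pos (div_pos hx0 hy0)
    _ = (x - y) / y := by field_simp
    _ ≤ (x - y) / c := by gcongr

lemma abs_sq_sub_sq_le_of_abs_le_one {x y : ℝ} (hx : |x| ≤ 1) (hy : |y| ≤ 1) :
    |x ^ 2 - y ^ 2| ≤ 2 * |x - y| := by
  have hxy : |x + y| ≤ 2 := (abs_add_le x y).trans (by linarith)
  calc |x ^ 2 - y ^ 2| = |x - y| * |x + y| := by rw [← abs_mul]; ring_nf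
    _ ≤ |x - y| * 2 := by gcongr
    _ = 2 * |x - y| := mul_comm _ _

lemma abs_mul_sub_mul_le_of_abs_le_one {a b a' b' : ℝ} (hb : |b| ≤ 1) (ha' : |a'| ≤ 1) :
    |a * b - a' * b'| ≤ |a - a'| + |b - b'| := by
  calc |a * b - a' * b'| = |(a - a') * b + a' * (b - b')| := by ring_nf
    _ ≤ |a - a'| * |b| + |a'| * |b - b'| := by
        rw [← abs_mul, ← abs_mul]; exact abs_add_le _ _
    _ ≤ |a - a'| * 1 + 1 * |b - b'| := by gcongr
    _ = |a - a'| + |b - b'| := by ring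

section InnerProductSpace

variable {F : Type*} [NormedAddCommGroup F] [InnerProductSpace ℝ F]

lemma abs_real_inner_le_one_s10 {u v : F} (hu : ‖u‖ ≤ 1) (hv : ‖v‖ ≤ 1) : |⟪u, v⟫| ≤ 1 :=
  (abs_real_inner_le_norm u v).trans (mul_le_one₀ hu (norm_nonneg v) hv)

lemma abs_real_inner_mul_inner_le_one {u v u' v' : F} (hu : ‖u‖ ≤ 1) (hv : ‖v‖ ≤ 1)
    (hu' : ‖u'‖ ≤ 1) (hv' : ‖v'‖ ≤ 1) : |⟪u, v⟫ * ⟪u', v'⟫| ≤ 1 := by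
  rw [abs_mul]
  exact mul_le_one₀ (abs_real_inner_le_one_s10 hu hv) (abs_nonneg _) (abs_real_inner_le_one_s10 hu' hv')

lemma abs_real_inner_sub_inner_le {a b a' b' : F} (ha : ‖a‖ ≤ 1) (hb' : ‖b'‖ ≤ 1) :
    |⟪a, b⟫ - ⟪a', b'⟫| ≤ ‖a - a'‖ + ‖b - b'‖ := by
  have hsplit : ⟪a, b⟫ - ⟪a', b'⟫ = ⟪a, b - b'⟫ + ⟪a - a', b'⟫ := by
    simp only [inner_sub_left, inner_sub_right]; ring
  calc |⟪a, b⟫ - ⟪a', b'⟫| ≤ |⟪a, b - b'⟫| + |⟪a - a', b'⟫| := hsplit ▸ abs_add_le _ _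
    _ ≤ ‖a‖ * ‖b - b'‖ + ‖a - a'‖ * ‖b'‖ :=
        add_le_add (abs_real_inner_le_norm _ _) (abs_real_inner_le_norm _ _)
    _ ≤ 1 * ‖b - b'‖ + ‖a - a'‖ * 1 := by gcongr
    _ = ‖a - a'‖ + ‖b - b'‖ := by ring

variable {ι : Type*} [Fintype ι]

/-- `tr ((G_z ⊙ G_w)²) = ∑ᵢⱼ (G_z ⊙ G_w)ᵢⱼ²` for the Gram matrices `G_z`, `G_w` of `z`, `w`. -/
def hadamardGramSqSum (z w : ι → F) : ℝ :=
  ∑ i, ∑ j, (⟪z i, z j⟫ * ⟪w i, w j⟫) ^ 2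

lemma card_le_hadamardGramSqSum {z w : ι → F} (hz : ∀ i, ‖z i‖ = 1) (hw : ∀ i, ‖w i‖ = 1) :
    (Fintype.card ι : ℝ) ≤ hadamardGramSqSum z w := by
  have hdiag (i : ι) : (1 : ℝ) ≤ ∑ j, (⟪z i, z j⟫ * ⟪w i, w j⟫) ^ 2 := by
    have hii : (⟪z i, z i⟫ * ⟪w i, w i⟫) ^ 2 = 1 := by
      rw [real_inner_self_eq_norm_sq, real_inner_self_eq_norm_sq, hz, hw]; norm_num
    exact hii ▸ single_le_sum (f := fun j => (⟪z i, z j⟫ * ⟪w i, w j⟫) ^ 2)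
      (fun j _ => sq_nonneg _) (mem_univ i)
  calc (Fintype.card ι : ℝ) = ∑ _i : ι, 1 := by simp
    _ ≤ hadamardGramSqSum z w := sum_le_sum fun i _ => hdiag i

lemma abs_hadamardGramSqSum_sub_le {z w z' w' : ι → F}
    (hz : ∀ i, ‖z i‖ ≤ 1) (hw : ∀ i, ‖w i‖ ≤ 1) (hz' : ∀ i, ‖z' i‖ ≤ 1)
    (hw' : ∀ i, ‖w' i‖ ≤ 1) :
    |hadamardGramSqSum z w - hadamardGramSqSum z' w'| ≤
      4 * Fintype.card ι * ∑ i, (‖z i - z' i‖ + ‖w i - w' i‖) := by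
  set δ : ι → ℝ := fun i => ‖z i - z' i‖ + ‖w i - w' i‖
  have hentry (i j : ι) :
      |(⟪z i, z j⟫ * ⟪w i, w j⟫) ^ 2 - (⟪z' i, z' j⟫ * ⟪w' i, w' j⟫) ^ 2| ≤ 2 * (δ i + δ j) := by
    have hz_ij := abs_real_inner_sub_inner_le (b := z j) (a' := z' i) (hz i) (hz' j)
    have hw_ij := abs_real_inner_sub_inner_le (b := w j) (a' := w' i) (hw i) (hw' j)
    have hprod := abs_mul_sub_mul_le_of_abs_le_one (a := ⟪z i, z j⟫) (b' := ⟪w' i, w' j⟫)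
      (abs_real_inner_le_one_s10 (hw i) (hw j)) (abs_real_inner_le_one_s10 (hz' i) (hz' j))
    calc _ ≤ 2 * |⟪z i, z j⟫ * ⟪w i, w j⟫ - ⟪z' i, z' j⟫ * ⟪w' i, w' j⟫| :=
          abs_sq_sub_sq_le_of_abs_le_one
            (abs_real_inner_mul_inner_le_one (hz i) (hz j) (hw i) (hw j))
            (abs_real_inner_mul_inner_le_one (hz' i) (hz' j) (hw' i) (hw' j))
      _ ≤ 2 * (δ i + δ j) := by simp only [δ]; linarith
  calc |hadamardGramSqSum z w - hadamardGramSqSum z' w'|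
      = |∑ i, ∑ j, ((⟪z i, z j⟫ * ⟪w i, w j⟫) ^ 2 - (⟪z' i, z' j⟫ * ⟪w' i, w' j⟫) ^ 2)| := by
        simp only [hadamardGramSqSum, sum_sub_distrib]
    _ ≤ ∑ i, ∑ j, 2 * (δ i + δ j) :=
        (abs_sum_le_sum_abs _ _).trans <| sum_le_sum fun i _ =>
          (abs_sum_le_sum_abs _ _).trans <| sum_le_sum fun j _ => hentry i j
    _ = 4 * Fintype.card ι * ∑ i, δ i := by
        simp only [mul_add, sum_add_distrib, sum_const, card_univ, nsmul_eq_mul, ← mul_sum]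
        ring

end InnerProductSpace

/-- Hadamard-product entropy perturbation. For four families of
unit vectors, the difference of `log ∑ᵢⱼ (⟨z⁽¹⁾ᵢ,z⁽¹⁾ⱼ⟩·⟨z⁽²⁾ᵢ,z⁽²⁾ⱼ⟩)²` is
bounded by `8 ∑ₖ ∑ᵢ ‖z⁽ᵏ⁾ᵢ - (z′)⁽ᵏ⁾ᵢ‖`. -/
theorem statement10 {n d : ℕ} (hn : 1 ≤ n)
    (z1 z2 z1' z2' : Fin n → EuclideanSpace ℝ (Fin d))
    (hz1 : ∀ i, ‖z1 i‖ = 1) (hz2 : ∀ i, ‖z2 i‖ = 1)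
    (hz1' : ∀ i, ‖z1' i‖ = 1) (hz2' : ∀ i, ‖z2' i‖ = 1) :
    |Real.log (∑ i, ∑ j, (⟪z1 i, z1 j⟫ * ⟪z2 i, z2 j⟫) ^ 2) -
        Real.log (∑ i, ∑ j, (⟪z1' i, z1' j⟫ * ⟪z2' i, z2' j⟫) ^ 2)| ≤
      8 * ((∑ i, ‖z1 i - z1' i‖) + ∑ i, ‖z2 i - z2' i‖) := by
  have hn0 : (0 : ℝ) < n := by exact_mod_cast hn
  have hS := card_le_hadamardGramSqSum hz1 hz2
  have hS' := card_le_hadamardGramSqSum hz1' hz2'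
  have hdiff := abs_hadamardGramSqSum_sub_le (fun i => (hz1 i).le) (fun i => (hz2 i).le)
    (fun i => (hz1' i).le) (fun i => (hz2' i).le)
  rw [Fintype.card_fin] at hS hS' hdiff
  rw [sum_add_distrib] at hdiff
  calc _ ≤ |hadamardGramSqSum z1 z2 - hadamardGramSqSum z1' z2'| / n :=
        abs_log_sub_log_le_abs_sub_div hn0 hS hS'
    _ ≤ 4 * n * ((∑ i, ‖z1 i - z1' i‖) + ∑ i, ‖z2 i - z2' i‖) / n := by gcongr
    _ = 4 * ((∑ i, ‖z1 i - z1' i‖) + ∑ i, ‖z2 i - z2' i‖) := by field_simp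
    _ ≤ _ := by gcongr; norm_num
end

section
/- Let n ≥ 1, σ > 0, let x_1,…,x_n ∈ ℝ^d, and let f : ℝ^d → ℝ^k be continuous with ‖f(x)‖₂ = 1 for every x. For a perturbation Δ = (Δ_1,…,Δ_n) ∈ (ℝ^d)^n define H(Δ) = 2·log n − log(∑_{i,j} ⟨f(x_i + Δ_i), f(x_j + Δ_j)⟩²), and let μ_σ be the Gaussian measure N(0, σ²I) on (ℝ^d)^n, i.e. the n·d-fold product over all coordinates of the one-dimensional Gaussian measure with mean 0 and variance σ². Assume that Δ ↦ H(Δ) and Δ ↦ ∑_{i=1}^n ‖f(x_i + Δ_i) − f(x_i)‖₂ are integrable with respect to μ_σ. Then |∫ H(Δ) dμ_σ(Δ) − H(0)| ≤ 8·∫ ∑_{i=1}^n ‖f(x_i + Δ_i) − f(x_i)‖₂ dμ_σ(Δ). -/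
open MeasureTheory ProbabilityTheory
open scoped RealInnerProductSpace

/-- The Gaussian measure `N(0, σ²I)` on `(ℝ^d)^n`, the `n·d`-fold product over
all coordinates of the one-dimensional Gaussian with mean `0`, variance `σ²`. -/
noncomputable def gaussPi (n d : ℕ) (σ : ℝ) :
    Measure (Fin n → EuclideanSpace ℝ (Fin d)) :=
  Measure.pi fun _ : Fin n =>
    (Measure.map (WithLp.toLp 2)
      (Measure.pi fun _ : Fin d => gaussianReal 0 ⟨σ ^ 2, sq_nonneg σ⟩) :
      Measure (EuclideanSpace ℝ (Fin d)))

lemma log_abs_sub_le_aux {c p q : ℝ} (hc : 0 < c) (hp : c ≤ p) (hq : c ≤ q) :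
    Real.log p - Real.log q ≤ |p - q| / c := by
  rcases le_total p q with h | h
  · have h1 : Real.log p ≤ Real.log q := Real.log_le_log (hc.trans_le hp) h
    have : |p - q| / c ≥ 0 := by positivity
    linarith
  · have hq0 : 0 < q := hc.trans_le hq
    have hp0 : 0 < p := hc.trans_le hp
    have h1 : Real.log p - Real.log q = Real.log (p / q) :=
      (Real.log_div hp0.ne' hq0.ne').symm
    have h2 : Real.log (p / q) ≤ p / q - 1 :=
      Real.log_le_sub_one_of_pos (div_pos hp0 hq0)
    have h3 : p / q - 1 = (p - q) / q := by field_simp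
    have h4 : (p - q) / q ≤ (p - q) / c :=
      div_le_div_of_nonneg_left (by linarith) hc hq
    have h5 : |p - q| = p - q := abs_of_nonneg (by linarith)
    rw [h5]; linarith

lemma log_abs_sub_le {c a b : ℝ} (hc : 0 < c) (ha : c ≤ a) (hb : c ≤ b) :
    |Real.log a - Real.log b| ≤ |a - b| / c := by
  rw [abs_sub_le_iff]
  constructor
  · exact log_abs_sub_le_aux hc ha hb
  · rw [abs_sub_comm]; exact log_abs_sub_le_aux hc hb ha

/-- the entropy difference `|∫ H dμ_σ - H(0)|` is bounded by
`8 ∫ ∑ᵢ ‖f(xᵢ+Δᵢ) - f(xᵢ)‖ dμ_σ`, where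
`H(Δ) = 2 log n - log ∑ᵢⱼ ⟨f(xᵢ+Δᵢ), f(xⱼ+Δⱼ)⟩²` is the order-2 perturb
entropy of the Gram matrix of the unit-norm representations. -/
theorem statement12 {n d k : ℕ} (hn : 1 ≤ n) (σ : ℝ) (hσ : 0 < σ)
    (x : Fin n → EuclideanSpace ℝ (Fin d))
    (f : EuclideanSpace ℝ (Fin d) → EuclideanSpace ℝ (Fin k))
    (hf : Continuous f) (hnorm : ∀ v, ‖f v‖ = 1)
    (H : (Fin n → EuclideanSpace ℝ (Fin d)) → ℝ)
    (hH : ∀ Δ, H Δ = 2 * Real.log n -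
      Real.log (∑ i, ∑ j, ⟪f (x i + Δ i), f (x j + Δ j)⟫ ^ 2))
    (hint1 : Integrable H (gaussPi n d σ))
    (hint2 : Integrable (fun Δ => ∑ i, ‖f (x i + Δ i) - f (x i)‖)
      (gaussPi n d σ)) :
    |(∫ Δ, H Δ ∂(gaussPi n d σ)) - H 0| ≤
      8 * ∫ Δ, ∑ i, ‖f (x i + Δ i) - f (x i)‖ ∂(gaussPi n d σ) := by
  haveI h1 : IsProbabilityMeasure
      ((Measure.map (WithLp.toLp 2)
        (Measure.pi fun _ : Fin d => gaussianReal 0 ⟨σ ^ 2, sq_nonneg σ⟩) :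
          Measure (EuclideanSpace ℝ (Fin d)))) :=
    haveI : ∀ _ : Fin d, IsProbabilityMeasure (gaussianReal 0 ⟨σ ^ 2, sq_nonneg σ⟩) :=
      fun _ => instIsProbabilityMeasureGaussianReal _ _
    Measure.isProbabilityMeasure_map (WithLp.measurable_toLp 2 _).aemeasurable
  haveI : IsProbabilityMeasure (gaussPi n d σ) := by
    unfold gaussPi; exact Measure.pi.instIsProbabilityMeasure _
  set μ := gaussPi n d σ with hμ
  set g : (Fin n → EuclideanSpace ℝ (Fin d)) → ℝ :=
    fun Δ => ∑ i, ‖f (x i + Δ i) - f (x i)‖ with hgdef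
  have hnpos : (0:ℝ) < n := by exact_mod_cast hn
  -- pointwise bound
  have hpt : ∀ Δ, |H Δ - H 0| ≤ 8 * g Δ := by
    intro Δ
    set u : Fin n → EuclideanSpace ℝ (Fin k) := fun i => f (x i) with hu
    set v : Fin n → EuclideanSpace ℝ (Fin k) := fun i => f (x i + Δ i) with hv
    set S : ℝ := ∑ i, ∑ j, ⟪v i, v j⟫ ^ 2 with hS
    set S0 : ℝ := ∑ i, ∑ j, ⟪u i, u j⟫ ^ 2 with hS0
    have hHd : H Δ = 2 * Real.log n - Real.log S := hH Δ
    have hH0 : H 0 = 2 * Real.log n - Real.log S0 := by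
      rw [hH 0]
      simp only [hS0, hu, Pi.zero_apply, add_zero]
    have hgnonneg : 0 ≤ g Δ := Finset.sum_nonneg fun i _ => norm_nonneg _
    -- lower bounds on S, S0
    have hlow : ∀ w : Fin n → EuclideanSpace ℝ (Fin k), (∀ i, ‖w i‖ = 1) →
        (n:ℝ) ≤ ∑ i, ∑ j, ⟪w i, w j⟫ ^ 2 := by
      intro w hw
      have : ∀ i : Fin n, (1:ℝ) ≤ ∑ j, ⟪w i, w j⟫ ^ 2 := by
        intro i
        have h1 : ⟪w i, w i⟫ = 1 := by
          rw [real_inner_self_eq_norm_sq, hw i]; norm_num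
        calc (1:ℝ) = ⟪w i, w i⟫ ^ 2 := by rw [h1]; norm_num
          _ ≤ ∑ j, ⟪w i, w j⟫ ^ 2 :=
            Finset.single_le_sum (f := fun j => ⟪w i, w j⟫ ^ 2)
              (fun j _ => sq_nonneg _) (Finset.mem_univ i)
      calc (n:ℝ) = ∑ _i : Fin n, (1:ℝ) := by simp
        _ ≤ _ := Finset.sum_le_sum fun i _ => this i
    have hSlow : (n:ℝ) ≤ S := hlow v fun i => hnorm _
    have hS0low : (n:ℝ) ≤ S0 := hlow u fun i => hnorm _
    -- term bound
    have hterm : ∀ i j : Fin n, |⟪v i, v j⟫ ^ 2 - ⟪u i, u j⟫ ^ 2| ≤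
        2 * (‖v i - u i‖ + ‖v j - u j‖) := by
      intro i j
      have hva : |⟪v i, v j⟫| ≤ 1 := by
        have := abs_real_inner_le_norm (v i) (v j)
        simpa [hv, hnorm] using this
      have hub : |⟪u i, u j⟫| ≤ 1 := by
        have := abs_real_inner_le_norm (u i) (u j)
        simpa [hu, hnorm] using this
      have hdiff : |⟪v i, v j⟫ - ⟪u i, u j⟫| ≤ ‖v i - u i‖ + ‖v j - u j‖ := by
        have heq : ⟪v i, v j⟫ - ⟪u i, u j⟫ = ⟪v i - u i, v j⟫ + ⟪u i, v j - u j⟫ := by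
          rw [inner_sub_left, inner_sub_right]; ring
        calc |⟪v i, v j⟫ - ⟪u i, u j⟫| = |⟪v i - u i, v j⟫ + ⟪u i, v j - u j⟫| := by
              rw [heq]
          _ ≤ |⟪v i - u i, v j⟫| + |⟪u i, v j - u j⟫| := abs_add_le _ _
          _ ≤ ‖v i - u i‖ * ‖v j‖ + ‖u i‖ * ‖v j - u j‖ :=
              add_le_add (abs_real_inner_le_norm _ _) (abs_real_inner_le_norm _ _)
          _ = ‖v i - u i‖ + ‖v j - u j‖ := by
              simp [hu, hv, hnorm]
      have hfact : ⟪v i, v j⟫ ^ 2 - ⟪u i, u j⟫ ^ 2 =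
          (⟪v i, v j⟫ + ⟪u i, u j⟫) * (⟪v i, v j⟫ - ⟪u i, u j⟫) := by ring
      calc |⟪v i, v j⟫ ^ 2 - ⟪u i, u j⟫ ^ 2|
          = |⟪v i, v j⟫ + ⟪u i, u j⟫| * |⟪v i, v j⟫ - ⟪u i, u j⟫| := by
            rw [hfact, abs_mul]
        _ ≤ 2 * (‖v i - u i‖ + ‖v j - u j‖) := by
            apply mul_le_mul
            · calc |⟪v i, v j⟫ + ⟪u i, u j⟫| ≤ |⟪v i, v j⟫| + |⟪u i, u j⟫| := abs_add_le _ _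
                _ ≤ 2 := by linarith
            · exact hdiff
            · exact abs_nonneg _
            · norm_num
    -- sum bound
    have hSdiff : |S - S0| ≤ 4 * n * g Δ := by
      have h1 : |S - S0| ≤ ∑ i, ∑ j, |⟪v i, v j⟫ ^ 2 - ⟪u i, u j⟫ ^ 2| := by
        rw [hS, hS0, ← Finset.sum_sub_distrib]
        refine (Finset.abs_sum_le_sum_abs _ _).trans ?_
        refine Finset.sum_le_sum fun i _ => ?_
        rw [← Finset.sum_sub_distrib]
        exact Finset.abs_sum_le_sum_abs _ _
      have h2 : ∑ i, ∑ j, |⟪v i, v j⟫ ^ 2 - ⟪u i, u j⟫ ^ 2| ≤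
          ∑ i, ∑ j, 2 * (‖v i - u i‖ + ‖v j - u j‖) :=
        Finset.sum_le_sum fun i _ => Finset.sum_le_sum fun j _ => hterm i j
      have h3 : ∑ i : Fin n, ∑ j : Fin n, 2 * (‖v i - u i‖ + ‖v j - u j‖) =
          4 * n * g Δ := by
        have hgΔ : g Δ = ∑ i, ‖v i - u i‖ := by simp [hgdef, hu, hv]
        simp only [mul_add, Finset.sum_add_distrib, Finset.sum_const,
          Finset.card_univ, Fintype.card_fin, nsmul_eq_mul, ← Finset.mul_sum,
          ← Finset.sum_mul]
        rw [hgΔ]; ring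
      linarith
    -- conclude
    have hHdiff : H Δ - H 0 = Real.log S0 - Real.log S := by
      rw [hHd, hH0]; ring
    rw [hHdiff]
    calc |Real.log S0 - Real.log S| ≤ |S0 - S| / n :=
        log_abs_sub_le hnpos hS0low hSlow
      _ ≤ (4 * n * g Δ) / n := by
          gcongr
          rw [abs_sub_comm]; exact hSdiff
      _ = 4 * g Δ := by field_simp
      _ ≤ 8 * g Δ := by linarith
  -- integration
  have hintsub : Integrable (fun Δ => H Δ - H 0) μ := hint1.sub (integrable_const _)
  have h0 : (∫ Δ, H Δ ∂μ) - H 0 = ∫ Δ, (H Δ - H 0) ∂μ := by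
    rw [integral_sub hint1 (integrable_const _), integral_const]
    simp
  rw [h0]
  calc |∫ Δ, (H Δ - H 0) ∂μ| ≤ ∫ Δ, |H Δ - H 0| ∂μ := by
        simpa [Real.norm_eq_abs] using norm_integral_le_integral_norm (fun Δ => H Δ - H 0) (μ := μ)
    _ ≤ ∫ Δ, 8 * g Δ ∂μ :=
        integral_mono hintsub.abs (hint2.const_mul 8) hpt
    _ = 8 * ∫ Δ, g Δ ∂μ := integral_const_mul 8 g
end
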